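/- Let δ ∈ (1/2, 1) and define G_δ(x) = H(δ) + δ·H(x) − (1 − xδ)·log 2 for x ∈ [0,1], where H(x) = −x·log x − (1−x)·log(1−x) is the binary entropy (with 0·log 0 = 0). Then G_δ has a unique zero x₀ in [0,1], and moreover 0 < x₀ < min{2/3, 2 − 1/δ}. -/
import Mathlib

noncomputable def binEnt (x : ℝ) : ℝ := -x * Real.log x - (1 - x) * Real.log (1 - x)

noncomputable def Gfun (δ x : ℝ) : ℝ := binEnt δ + δ * binEnt x - (1 - x * δ) * Real.log 2

lemma binEnt_eq (x : ℝ) : binEnt x = Real.binEntropy x := by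
  simp [binEnt, Real.binEntropy, Real.log_inv]; ring

lemma Gfun_eq (δ x : ℝ) :
    Gfun δ x = (binEnt δ - Real.log 2) + δ * Real.qaryEntropy 3 x := by
  simp [Gfun, Real.qaryEntropy, ← binEnt_eq]
  ring

lemma Gfun_special (δ : ℝ) (hδ1 : 1 / 2 < δ) (hδ2 : δ < 1) :
    Gfun δ (2 - 1 / δ) = binEnt (2 * δ - 1) := by
  have hδ0 : (0:ℝ) < δ := by linarith
  have hs : (0:ℝ) < 2 * δ - 1 := by linarith
  have ht : (0:ℝ) < 1 - δ := by linarith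
  have hx : 2 - 1 / δ = (2 * δ - 1) / δ := by field_simp
  have hx1 : 1 - (2 - 1 / δ) = (1 - δ) / δ := by field_simp; ring
  have hlx : Real.log ((2 * δ - 1) / δ) = Real.log (2 * δ - 1) - Real.log δ :=
    Real.log_div hs.ne' hδ0.ne'
  have hlx1 : Real.log ((1 - δ) / δ) = Real.log (1 - δ) - Real.log δ :=
    Real.log_div ht.ne' hδ0.ne'
  have h2 : Real.log (1 - (2 * δ - 1)) = Real.log 2 + Real.log (1 - δ) := by
    rw [show 1 - (2 * δ - 1) = 2 * (1 - δ) by ring, Real.log_mul (by norm_num) ht.ne']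
  have hmul : (2 - 1 / δ) * δ = 2 * δ - 1 := by field_simp
  rw [Gfun, binEnt, binEnt, hx1, hlx1, hmul, hx, hlx]
  rw [binEnt, h2]
  field_simp
  ring

theorem Gfun_unique_zero (δ : ℝ) (hδ1 : 1 / 2 < δ) (hδ2 : δ < 1) :
    ∃ x₀ : ℝ, x₀ ∈ Set.Icc (0 : ℝ) 1 ∧ Gfun δ x₀ = 0 ∧
      (∀ y ∈ Set.Icc (0 : ℝ) 1, Gfun δ y = 0 → y = x₀) ∧
      0 < x₀ ∧ x₀ < min (2 / 3) (2 - 1 / δ) := by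
  have hδ0 : (0:ℝ) < δ := by linarith
  set m : ℝ := min (2 / 3) (2 - 1 / δ) with hm
  have hinv : 1 / δ < 2 := by
    rw [div_lt_iff₀ hδ0]; linarith
  have hm0 : 0 < m := lt_min (by norm_num) (by linarith)
  have hm23 : m ≤ 2 / 3 := min_le_left _ _
  -- strict monotonicity on [0, 2/3]
  have hq : (1 : ℝ) - 1 / (3:ℕ) = 2 / 3 := by norm_num
  have hmono : StrictMonoOn (Gfun δ) (Set.Icc 0 (2/3)) := by
    intro x hx y hy hxy
    rw [Gfun_eq, Gfun_eq]
    have := (Real.qaryEntropy_strictMonoOn (q := 3) (by norm_num))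
      (by rw [hq]; exact hx) (by rw [hq]; exact hy) hxy
    nlinarith
  have hanti : StrictAntiOn (Gfun δ) (Set.Icc (2/3) 1) := by
    intro x hx y hy hxy
    rw [Gfun_eq, Gfun_eq]
    have := (Real.qaryEntropy_strictAntiOn (q := 3) (by norm_num))
      (by rw [hq]; exact hx) (by rw [hq]; exact hy) hxy
    nlinarith
  -- G(0) < 0
  have hG0 : Gfun δ 0 < 0 := by
    rw [Gfun_eq]
    simp only [Real.qaryEntropy_zero, mul_zero, add_zero]
    have : Real.binEntropy δ < Real.log 2 :=
      Real.binEntropy_lt_log_two.2 (by intro h; rw [h] at hδ1; norm_num at hδ1)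
    rw [binEnt_eq]; linarith
  -- G(1) > 0
  have hG1 : 0 < Gfun δ 1 := by
    have h1 : Gfun δ 1 = binEnt δ - (1 - δ) * Real.log 2 := by
      rw [Gfun]
      have : binEnt 1 = 0 := by simp [binEnt]
      rw [this]; ring
    have hlog : Real.log (1 - δ) < Real.log 2⁻¹ :=
      Real.log_lt_log (by linarith) (by rw [show (2:ℝ)⁻¹ = 1/2 by norm_num]; linarith)
    rw [Real.log_inv] at hlog
    have hld : Real.log δ < 0 := Real.log_neg hδ0 hδ2
    have hl2 : (0:ℝ) < Real.log 2 := Real.log_pos (by norm_num)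
    rw [h1, binEnt]
    nlinarith [mul_pos (show (0:ℝ) < 1 - δ by linarith) (show 0 < -Real.log (1-δ) - Real.log 2 by linarith)]
  -- G(m) > 0
  have hGsp : 0 < Gfun δ (2 - 1/δ) := by
    rw [Gfun_special δ hδ1 hδ2, binEnt_eq]
    exact Real.binEntropy_pos (by linarith) (by linarith)
  have hGm : 0 < Gfun δ m := by
    rcases min_cases (2/3 : ℝ) (2 - 1/δ) with ⟨h1, h2⟩ | ⟨h1, h2⟩
    · -- m = 2/3, and 2/3 ≤ 2 - 1/δ
      rw [hm, h1]
      have : Gfun δ 1 < Gfun δ (2/3) := hanti (by constructor <;> norm_num)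
        (by constructor <;> norm_num) (by norm_num)
      linarith
    · rw [hm, h1]; exact hGsp
  -- continuity
  have hcont : ContinuousOn (Gfun δ) (Set.Icc 0 m) := by
    have : Continuous (Gfun δ) := by
      have : Gfun δ = fun x => (binEnt δ - Real.log 2) + δ * Real.qaryEntropy 3 x := by
        funext x; exact Gfun_eq δ x
      rw [this]
      exact continuous_const.add (continuous_const.mul Real.qaryEntropy_continuous)
    exact this.continuousOn
  -- IVT
  have h0mem : (0:ℝ) ∈ Set.Ioo (Gfun δ 0) (Gfun δ m) := ⟨hG0, hGm⟩
  obtain ⟨x₀, hx₀mem, hx₀⟩ := intermediate_value_Ioo hm0.le hcont h0mem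
  have hx₀pos : 0 < x₀ := hx₀mem.1
  have hx₀m : x₀ < m := hx₀mem.2
  refine ⟨x₀, ⟨hx₀pos.le, by linarith⟩, hx₀, ?_, hx₀pos, hx₀m⟩
  intro y hy hGy
  by_cases hy23 : y ≤ 2/3
  · exact hmono.injOn ⟨hy.1, hy23⟩ ⟨hx₀pos.le, by linarith⟩ (by rw [hGy, hx₀])
  · push_neg at hy23
    have : Gfun δ 1 ≤ Gfun δ y := hanti.antitoneOn ⟨hy23.le, hy.2⟩ ⟨by norm_num, le_refl 1⟩ hy.2
    linarith
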